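/- If y² > τ₂*² (with w* ≠ 0, τ₁*², τ₂*² > 0), then the function D₁₂(η) = (1/2)log(ησ_X² + (1−η)σ_Y²) − (η/2)log σ_X² − ((1−η)/2)log τ₁*², where σ_X² = w*²τ₂*² + τ₁*² and σ_Y² = w*²y² + τ₁*², is strictly decreasing on (0,1). -/

import Mathlib

/-! No calculus is needed: `D₁₂` is half the logarithm of the mixture `η σ_X² + (1 - η) σ_Y²`,
which decreases in `η` because `σ_X² < σ_Y²` (this is `τ₂*² < y²`), minus the linear term
`η (log σ_X² - log τ₁*²) / 2`, whose slope is nonnegative because `τ₁*² ≤ σ_X²`. -/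

/-- The concentration exponent `D₁₂(η)` for the true model `X(2) → X(1)`
with a fraction `η` of observational samples. -/
noncomputable def D12 (sX sY t1 : ℝ) (η : ℝ) : ℝ :=
  (1 / 2) * Real.log (η * sX + (1 - η) * sY)
    - η / 2 * Real.log sX - (1 - η) / 2 * Real.log t1

theorem D12_strictAntiOn {sX sY t1 : ℝ} (ht1 : 0 < t1) (hX : t1 ≤ sX) (hXY : sX < sY) :
    StrictAntiOn (D12 sX sY t1) (Set.Icc 0 1) := by
  rintro a - b ⟨hb0, hb1⟩ hab
  have hmix_pos : 0 < b * sX + (1 - b) * sY := by nlinarith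
  have hmix_lt : b * sX + (1 - b) * sY < a * sX + (1 - a) * sY := by nlinarith
  have hlog_mix := Real.log_lt_log hmix_pos hmix_lt
  have hlog_slope : 0 ≤ (b - a) * (Real.log sX - Real.log t1) :=
    mul_nonneg (sub_nonneg.2 hab.le) (sub_nonneg.2 (Real.log_le_log ht1 hX))
  unfold D12
  linarith

theorem stmt_13 (w τ1 τ2 y : ℝ) (hw : w ≠ 0) (h1 : 0 < τ1) (h2 : 0 < τ2)
    (hy : τ2 < y ^ 2) :
    StrictAntiOn (D12 (w ^ 2 * τ2 + τ1) (w ^ 2 * y ^ 2 + τ1) τ1)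
      (Set.Ioo (0 : ℝ) 1) := by
  have hw2 : 0 < w ^ 2 := by positivity
  have hX : τ1 ≤ w ^ 2 * τ2 + τ1 := by nlinarith
  have hXY : w ^ 2 * τ2 + τ1 < w ^ 2 * y ^ 2 + τ1 := by nlinarith
  exact (D12_strictAntiOn h1 hX hXY).mono Set.Ioo_subset_Icc_self
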